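/- Let G = (V, E) be an undirected graph with V = {1, …, M} and M ≥ 8, and let Γ(G) be the delegation instance constructed from G. If every independent set of G has size at most M^{1/3}, then every feasible direct menu of deterministic payment schemes for Γ(G) has service provider expected utility at most 2β·M^{4/3}. -/

import Mathlib

open Finset

section Menus

variable {Θ Ω A : Type*}

/-- Expected payment `F_a^⊤ p` of the payment vector `p` under action `a`. -/
def ep [Fintype Ω] (F : A → Ω → ℝ) (a : A) (p : Ω → ℝ) : ℝ :=
  ∑ ω, F a ω * p ω

/-- The set `Π_a` of IC (nonnegative) payment vectors for action `a`, for the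
instance with outcome distributions `F` and costs `c`. -/
def icPayments [Fintype Ω] (F : A → Ω → ℝ) (c : A → ℝ) (a : A) : Set (Ω → ℝ) :=
  {p | (∀ ω, 0 ≤ p ω) ∧ ∀ a', ep F a p - c a ≥ ep F a' p - c a'}

/-- User utility of type `θ` for a direct-menu option (`none` is the opt-out pair,
interpreted as `F = 0`, cost `0`, payment `0`). -/
def optU [Fintype Ω] (F : A → Ω → ℝ) (R : Θ → Ω → ℝ) (θ : Θ)
    (o : Option (A × (Ω → ℝ))) : ℝ :=
  o.elim 0 fun ap => ep F ap.1 fun ω => R θ ω - ap.2 ω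

/-- Provider utility of a direct-menu option. -/
def optV [Fintype Ω] (F : A → Ω → ℝ) (c : A → ℝ) (o : Option (A × (Ω → ℝ))) : ℝ :=
  o.elim 0 fun ap => ep F ap.1 ap.2 - c ap.1

/-- A feasible direct menu: provider IC, user IC and user IR. -/
def DirectFeasible [Fintype Ω] (F : A → Ω → ℝ) (R : Θ → Ω → ℝ) (c : A → ℝ)
    (m : Θ → Option (A × (Ω → ℝ))) : Prop :=
  (∀ θ, (m θ).elim True fun ap => ap.2 ∈ icPayments F c ap.1) ∧
  (∀ θ θ', optU F R θ (m θ') ≤ optU F R θ (m θ)) ∧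
  (∀ θ, 0 ≤ optU F R θ (m θ))

/-- Expected provider utility of a direct menu under the type distribution `ξ`. -/
def directValue [Fintype Θ] [Fintype Ω] (ξ : Θ → ℝ) (F : A → Ω → ℝ) (c : A → ℝ)
    (m : Θ → Option (A × (Ω → ℝ))) : ℝ :=
  ∑ θ, ξ θ * optV F c (m θ)

end Menus

section GraphInstance

/-- The exponent `M·v + i` (with `1`-based labels `v, i ∈ {1, …, M}`) associated to the
pair index `(v, i)` in the instance `Γ(G)`. -/
def gExp (M : ℕ) (vi : Fin M × Fin M) : ℕ :=
  M * (vi.1.val + 1) + (vi.2.val + 1)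

/-- Outcome distributions of `Γ(G)`: action `a_{v,i}` is a Dirac on outcome `ω_{v,i}`. -/
def gF (M : ℕ) : (Fin M × Fin M) → (Fin M × Fin M) → ℝ :=
  fun a ω => if ω = a then 1 else 0

/-- Rewards of `Γ(G)`: type `θ_{v,i}` has reward `M^{−Mv−i}` on outcome `ω_{w,j}` iff
`(w = v ∧ j = i)` or (`(v,w) ∈ E` and `v < w`), and `0` otherwise. -/
noncomputable def gR (M : ℕ) (G : SimpleGraph (Fin M)) [DecidableRel G.Adj] :
    (Fin M × Fin M) → (Fin M × Fin M) → ℝ :=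
  fun θ ω =>
    if (ω.1 = θ.1 ∧ ω.2 = θ.2) ∨ (G.Adj θ.1 ω.1 ∧ θ.1 < ω.1) then
      ((M : ℝ) ^ (gExp M θ))⁻¹
    else 0

/-- The normalizing constant `β` of `Γ(G)`. -/
noncomputable def gbeta (M : ℕ) : ℝ :=
  (∑ vi : Fin M × Fin M, (M : ℝ) ^ (gExp M vi))⁻¹

/-- Type distribution of `Γ(G)`: `ξ_{θ_{v,i}} = β · M^{Mv+i}`. -/
noncomputable def gxi (M : ℕ) (θ : Fin M × Fin M) : ℝ :=
  gbeta M * (M : ℝ) ^ (gExp M θ)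

/-- Costs of `Γ(G)` are identically `0`. -/
def gc (M : ℕ) : (Fin M × Fin M) → ℝ := fun _ => 0

end GraphInstance

open Finset

lemma ep_gF (M : ℕ) (a : Fin M × Fin M) (p : Fin M × Fin M → ℝ) : ep (gF M) a p = p a := by
  simp [ep, gF]

lemma optV_some (M : ℕ) (a : Fin M × Fin M) (p : (Fin M × Fin M) → ℝ) :
    optV (gF M) (gc M) (some (a,p)) = p a := by
  simp [optV, gc, ep, gF]

lemma optU_some (M : ℕ) (G : SimpleGraph (Fin M)) [DecidableRel G.Adj] (θ a : Fin M × Fin M)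
    (p : (Fin M × Fin M) → ℝ) :
    optU (gF M) (gR M G) θ (some (a,p)) = gR M G θ a - p a := by
  simp [optU, ep, gF]

lemma gExp_lt (M : ℕ) (θ θ' : Fin M × Fin M)
    (h : θ.1 < θ'.1 ∨ (θ.1 = θ'.1 ∧ θ.2 < θ'.2)) : gExp M θ < gExp M θ' := by
  have h2 : θ.2.val < M := θ.2.isLt
  rcases h with h | ⟨h1, h2'⟩
  · have h' : θ.1.val + 1 ≤ θ'.1.val := h
    have : M * (θ.1.val + 1) + M ≤ M * (θ'.1.val + 1) := by nlinarith
    unfold gExp; omega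
  · have hv : M * (θ.1.val + 1) = M * (θ'.1.val + 1) := by rw [h1]
    have : θ.2.val < θ'.2.val := h2'
    unfold gExp; omega

lemma gR_le (M : ℕ) (G : SimpleGraph (Fin M)) [DecidableRel G.Adj] (θ a : Fin M × Fin M) :
    gR M G θ a ≤ ((M : ℝ) ^ gExp M θ)⁻¹ := by
  unfold gR; split
  · exact le_rfl
  · positivity
/-- Completeness of the reduction: if every independent set of `G` has size at most
`M^{1/3}`, then every feasible direct menu of deterministic payment schemes for `Γ(G)`
has provider expected utility at most `2β · M^{4/3}`. -/
theorem stmt19 (M : ℕ) (hM : 8 ≤ M) (G : SimpleGraph (Fin M)) [DecidableRel G.Adj]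
    (hind : ∀ S : Finset (Fin M), (∀ v ∈ S, ∀ w ∈ S, ¬ G.Adj v w) →
      (S.card : ℝ) ≤ (M : ℝ) ^ ((1 : ℝ) / 3)) :
    ∀ m : (Fin M × Fin M) → Option ((Fin M × Fin M) × ((Fin M × Fin M) → ℝ)),
      DirectFeasible (gF M) (gR M G) (gc M) m →
      directValue (gxi M) (gF M) (gc M) m ≤ 2 * gbeta M * (M : ℝ) ^ ((4 : ℝ) / 3) := by
  intro m hm
  classical
  obtain ⟨hPIC, hUIC, hIR⟩ := hm
  set q : (Fin M × Fin M) → ℝ := fun θ => optV (gF M) (gc M) (m θ) with hq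
  have hM1 : (1:ℝ) ≤ (M:ℝ) := by
    have : (8:ℝ) ≤ (M:ℝ) := by exact_mod_cast hM
    linarith
  have hM0 : (0:ℝ) < (M:ℝ) := by linarith
  -- q is nonnegative
  have hq0 : ∀ θ, 0 ≤ q θ := by
    intro θ
    cases hmθ : m θ with
    | none => simp [hq, optV, hmθ]
    | some ap =>
      obtain ⟨a, p⟩ := ap
      have hic := hPIC θ
      rw [hmθ] at hic
      simp only [Option.elim_some] at hic
      have : q θ = p a := by rw [hq]; simp only [hmθ, optV_some]
      rw [this]
      exact hic.1 a
  -- q is bounded by the max reward of the type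
  have hq_le : ∀ θ, q θ ≤ ((M:ℝ) ^ gExp M θ)⁻¹ := by
    intro θ
    cases hmθ : m θ with
    | none =>
      have : q θ = 0 := by simp [hq, optV, hmθ]
      rw [this]; positivity
    | some ap =>
      obtain ⟨a, p⟩ := ap
      have hir := hIR θ
      rw [hmθ, optU_some] at hir
      have hqe : q θ = p a := by rw [hq]; simp only [hmθ, optV_some]
      have := gR_le M G θ a
      linarith
  -- the kill lemma
  have hkill : ∀ θ θ' a' p', m θ' = some (a', p') → gExp M θ < gExp M θ' →
      G.Adj θ.1 a'.1 → θ.1 < a'.1 → q θ ≤ ((M:ℝ) ^ (gExp M θ + 1))⁻¹ := by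
    intro θ θ' a' p' hm' he hadj hlt
    have hRθa' : gR M G θ a' = ((M:ℝ) ^ gExp M θ)⁻¹ := by
      unfold gR; rw [if_pos (Or.inr ⟨hadj, hlt⟩)]
    have hp'a' : p' a' = q θ' := by rw [hq]; simp only [hm', optV_some]
    have hq' : q θ' ≤ ((M:ℝ) ^ gExp M θ')⁻¹ := hq_le θ'
    have hmono : ((M:ℝ) ^ gExp M θ')⁻¹ ≤ ((M:ℝ) ^ (gExp M θ + 1))⁻¹ := by
      apply inv_anti₀ (by positivity)
      exact pow_le_pow_right₀ hM1 he
    cases hmθ : m θ with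
    | none =>
      have : q θ = 0 := by simp [hq, optV, hmθ]
      rw [this]; positivity
    | some ap =>
      obtain ⟨a, p⟩ := ap
      have hic := hUIC θ θ'
      rw [hmθ, hm', optU_some, optU_some] at hic
      have hqe : q θ = p a := by rw [hq]; simp only [hmθ, optV_some]
      have hRa := gR_le M G θ a
      linarith
  -- types with large payment are served an action with positive reward
  have hserve : ∀ θ : Fin M × Fin M, ((M:ℝ) ^ (gExp M θ + 1))⁻¹ < q θ →
      ∃ a p, m θ = some (a, p) ∧ (a = θ ∨ (G.Adj θ.1 a.1 ∧ θ.1 < a.1)) := by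
    intro θ hθ
    have hpos : 0 < q θ := lt_of_le_of_lt (by positivity) hθ
    cases hmθ : m θ with
    | none =>
      exfalso
      have : q θ = 0 := by simp [hq, optV, hmθ]
      linarith
    | some ap =>
      obtain ⟨a, p⟩ := ap
      refine ⟨a, p, rfl, ?_⟩
      have hir := hIR θ
      rw [hmθ, optU_some] at hir
      have hqe : q θ = p a := by rw [hq]; simp only [hmθ, optV_some]
      by_contra hc
      have hR0 : gR M G θ a = 0 := by
        unfold gR
        rw [if_neg]
        rintro (⟨h1, h2⟩ | h)
        · exact hc (Or.inl (Prod.ext h1 h2))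
        · exact hc (Or.inr h)
      linarith
  -- the set of big-payment types
  set T : Finset (Fin M × Fin M) :=
    univ.filter (fun θ => ((M:ℝ) ^ (gExp M θ + 1))⁻¹ < q θ) with hTdef
  set TA : Finset (Fin M × Fin M) :=
    T.filter (fun θ => (m θ).map Prod.fst = some θ) with hTAdef
  set TB : Finset (Fin M × Fin M) :=
    T.filter (fun θ => ¬ ((m θ).map Prod.fst = some θ)) with hTBdef
  -- kill lemma specialized: a self-served type at a later neighbor kills a type
  have hkillA : ∀ θ θ' : Fin M × Fin M, θ' ∈ TA → G.Adj θ.1 θ'.1 → θ.1 < θ'.1 → θ ∉ T := by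
    intro θ θ' hθ' hadj hlt
    obtain ⟨hθ'T, hmap⟩ := mem_filter.mp hθ'
    obtain ⟨a', p', hm'⟩ : ∃ a' p', m θ' = some (a', p') := by
      cases hmθ' : m θ' with
      | none => rw [hmθ'] at hmap; simp at hmap
      | some ap => obtain ⟨a, p⟩ := ap; exact ⟨a, p, rfl⟩
    have ha' : a' = θ' := by
      rw [hm'] at hmap; simpa using hmap
    have hqb := hkill θ θ' a' p' hm' (gExp_lt M θ θ' (Or.inl hlt)) (ha' ▸ hadj) (ha' ▸ hlt)
    intro hθT
    have := (mem_filter.mp hθT).2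
    linarith
  -- the vertices of self-served big types form an independent set
  set S : Finset (Fin M) := TA.image Prod.fst with hSdef
  have hSind : ∀ v ∈ S, ∀ w ∈ S, ¬ G.Adj v w := by
    intro v hv w hw hadj
    obtain ⟨θ, hθTA, hθv⟩ := mem_image.mp hv
    obtain ⟨θ', hθ'TA, hθ'w⟩ := mem_image.mp hw
    rcases lt_trichotomy θ.1 θ'.1 with hlt | heq | hgt
    · exact hkillA θ θ' hθ'TA (by rw [hθv, hθ'w]; exact hadj) hlt (mem_filter.mp hθTA).1
    · exact G.ne_of_adj hadj (by rw [← hθv, ← hθ'w, heq])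
    · exact hkillA θ' θ hθTA (by rw [hθv, hθ'w]; exact hadj.symm) hgt (mem_filter.mp hθ'TA).1
  have hScard : (S.card : ℝ) ≤ (M:ℝ) ^ ((1:ℝ)/3) := hind S hSind
  -- |TA| ≤ |S| * M
  have hTAcard : TA.card ≤ S.card * M := by
    have hsub : TA ⊆ S ×ˢ univ := by
      intro θ hθ
      exact mem_product.mpr ⟨mem_image_of_mem _ hθ, mem_univ _⟩
    calc TA.card ≤ (S ×ˢ (univ : Finset (Fin M))).card := card_le_card hsub
      _ = S.card * M := by rw [card_product, card_univ, Fintype.card_fin]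
  -- |TB| ≤ M
  have hkillB : ∀ θ θ' : Fin M × Fin M, θ' ∈ TB → θ.1 = θ'.1 → gExp M θ < gExp M θ' →
      θ ∉ T := by
    intro θ θ' hθ' h1 he
    obtain ⟨hθ'T, hmap⟩ := mem_filter.mp hθ'
    have hbig : ((M:ℝ) ^ (gExp M θ' + 1))⁻¹ < q θ' := by
      have := (mem_filter.mp hθ'T).2
      simpa using this
    obtain ⟨a', p', hm', hcase⟩ := hserve θ' hbig
    rcases hcase with rfl | ⟨hadj, hlt⟩
    · exact absurd (by rw [hm']; rfl) hmap
    · have hqb := hkill θ θ' a' p' hm' he (h1 ▸ hadj) (h1 ▸ hlt)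
      intro hθT
      have := (mem_filter.mp hθT).2
      linarith
  have hTBcard : TB.card ≤ M := by
    have hinj : Set.InjOn Prod.fst (TB : Set (Fin M × Fin M)) := by
      intro θ hθ θ' hθ' h1
      by_contra hne
      have h2 : θ.2 ≠ θ'.2 := fun h => hne (Prod.ext h1 h)
      rcases lt_or_gt_of_ne h2 with hlt | hgt
      · exact hkillB θ θ' hθ' h1 (gExp_lt M θ θ' (Or.inr ⟨h1, hlt⟩))
          (mem_filter.mp hθ).1
      · exact hkillB θ' θ hθ h1.symm (gExp_lt M θ' θ (Or.inr ⟨h1.symm, hgt⟩))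
          (mem_filter.mp hθ').1
    calc TB.card ≤ (univ : Finset (Fin M)).card :=
          card_le_card_of_injOn Prod.fst (fun _ _ => mem_univ _) hinj
      _ = M := by rw [card_univ, Fintype.card_fin]
  have hTcard : (T.card : ℝ) ≤ (M:ℝ) ^ ((1:ℝ)/3) * M + M := by
    have := card_filter_add_card_filter_not
      (s := T) (p := fun θ => (m θ).map Prod.fst = some θ)
    have hT' : TA.card + TB.card = T.card := this
    have h1 : (TA.card : ℝ) ≤ (M:ℝ) ^ ((1:ℝ)/3) * M := by
      calc (TA.card : ℝ) ≤ (S.card : ℝ) * M := by exact_mod_cast hTAcard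
        _ ≤ (M:ℝ) ^ ((1:ℝ)/3) * M := by
            apply mul_le_mul_of_nonneg_right hScard (le_of_lt hM0)
    have h2 : (TB.card : ℝ) ≤ (M:ℝ) := by exact_mod_cast hTBcard
    calc (T.card : ℝ) = (TA.card : ℝ) + TB.card := by exact_mod_cast hT'.symm
      _ ≤ (M:ℝ) ^ ((1:ℝ)/3) * M + M := by linarith
  -- beta is positive
  have hbeta : 0 < gbeta M := by
    rw [gbeta]
    apply inv_pos.mpr
    apply Finset.sum_pos
    · intro vi _; positivity
    · exact ⟨(⟨0, by omega⟩, ⟨0, by omega⟩), mem_univ _⟩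
  -- the main sum bound
  have hval : directValue (gxi M) (gF M) (gc M) m = ∑ θ, gxi M θ * q θ := by
    simp only [directValue, hq]
  rw [hval]
  rw [← sum_filter_add_sum_filter_not univ
    (fun θ => ((M:ℝ) ^ (gExp M θ + 1))⁻¹ < q θ) (fun θ => gxi M θ * q θ)]
  have hbound1 : ∑ θ ∈ T, gxi M θ * q θ ≤ (T.card : ℝ) * gbeta M := by
    have : ∀ θ ∈ T, gxi M θ * q θ ≤ gbeta M := by
      intro θ _
      have h1 : gxi M θ * q θ ≤ gxi M θ * ((M:ℝ) ^ gExp M θ)⁻¹ := by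
        apply mul_le_mul_of_nonneg_left (hq_le θ)
        rw [gxi]; positivity
      have h2 : gxi M θ * ((M:ℝ) ^ gExp M θ)⁻¹ = gbeta M := by
        rw [gxi]
        field_simp
      linarith
    calc ∑ θ ∈ T, gxi M θ * q θ ≤ T.card • gbeta M := sum_le_card_nsmul _ _ _ this
      _ = (T.card : ℝ) * gbeta M := by rw [nsmul_eq_mul]
  have hbound2 : ∑ θ ∈ univ.filter (fun θ => ¬ (((M:ℝ) ^ (gExp M θ + 1))⁻¹ < q θ)),
      gxi M θ * q θ ≤ (M:ℝ) * gbeta M := by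
    set Tc := univ.filter (fun θ => ¬ (((M:ℝ) ^ (gExp M θ + 1))⁻¹ < q θ)) with hTc
    have hterm : ∀ θ ∈ Tc, gxi M θ * q θ ≤ gbeta M / M := by
      intro θ hθ
      have hle : q θ ≤ ((M:ℝ) ^ (gExp M θ + 1))⁻¹ := le_of_not_gt (mem_filter.mp hθ).2
      have h1 : gxi M θ * q θ ≤ gxi M θ * ((M:ℝ) ^ (gExp M θ + 1))⁻¹ := by
        apply mul_le_mul_of_nonneg_left hle
        rw [gxi]; positivity
      have h2 : gxi M θ * ((M:ℝ) ^ (gExp M θ + 1))⁻¹ = gbeta M / M := by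
        rw [gxi, pow_succ]
        field_simp
      linarith
    have hcard : Tc.card ≤ M * M := by
      calc Tc.card ≤ (univ : Finset (Fin M × Fin M)).card := card_le_card (filter_subset _ _)
        _ = M * M := by rw [card_univ, Fintype.card_prod, Fintype.card_fin]
    calc ∑ θ ∈ Tc, gxi M θ * q θ ≤ Tc.card • (gbeta M / M) := sum_le_card_nsmul _ _ _ hterm
      _ = (Tc.card : ℝ) * (gbeta M / M) := by rw [nsmul_eq_mul]
      _ ≤ (M * M : ℝ) * (gbeta M / M) := by
          apply mul_le_mul_of_nonneg_right _ (by positivity)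
          exact_mod_cast hcard
      _ = (M:ℝ) * gbeta M := by field_simp
  -- final arithmetic
  have h43 : (M:ℝ) ^ ((1:ℝ)/3) * M = (M:ℝ) ^ ((4:ℝ)/3) := by
    rw [show ((4:ℝ)/3) = 1/3 + 1 by norm_num, Real.rpow_add hM0, Real.rpow_one]
  have h13 : (2:ℝ) ≤ (M:ℝ) ^ ((1:ℝ)/3) := by
    have h8 : ((8:ℝ)) ^ ((1:ℝ)/3) ≤ (M:ℝ) ^ ((1:ℝ)/3) :=
      Real.rpow_le_rpow (by norm_num) (by exact_mod_cast hM) (by norm_num)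
    have h8v : ((8:ℝ)) ^ ((1:ℝ)/3) = 2 := by
      rw [show (8:ℝ) = (2:ℝ) ^ (3:ℝ) by
        rw [show (3:ℝ) = ((3:ℕ):ℝ) by norm_num, Real.rpow_natCast]; norm_num]
      rw [← Real.rpow_mul (by norm_num)]
      norm_num
    linarith
  have h2M : 2 * (M:ℝ) ≤ (M:ℝ) ^ ((4:ℝ)/3) := by
    calc 2 * (M:ℝ) ≤ (M:ℝ) ^ ((1:ℝ)/3) * M := by nlinarith
      _ = (M:ℝ) ^ ((4:ℝ)/3) := h43
  have hfinal : (T.card : ℝ) * gbeta M + (M:ℝ) * gbeta M ≤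
      2 * gbeta M * (M:ℝ) ^ ((4:ℝ)/3) := by
    have hT2 : (T.card : ℝ) ≤ (M:ℝ) ^ ((4:ℝ)/3) + M := by rw [← h43]; exact hTcard
    nlinarith [hbeta.le, h2M]
  calc ∑ θ ∈ T, gxi M θ * q θ +
        ∑ θ ∈ univ.filter (fun θ => ¬ (((M:ℝ) ^ (gExp M θ + 1))⁻¹ < q θ)), gxi M θ * q θ
      ≤ (T.card : ℝ) * gbeta M + (M:ℝ) * gbeta M := by linarith
    _ ≤ 2 * gbeta M * (M:ℝ) ^ ((4:ℝ)/3) := hfinal
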